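/- Fix real numbers m₀ ≥ 0 and define γ_k := 1/(k+1+m₀) for integers k ≥ 0, and b_{m,n}(z) := ∏_{k=m}^{n-1} (1 + γ_k(z-1)) for 0 ≤ m ≤ n. Then for each compact set K ⊂ ℂ there is a constant C such that uniformly for z ∈ K and 0 ≤ m ≤ n with n ≥ 1, |b_{m,n}(z)| ≤ C ((m₀+n)/(m₀+(m∨1)))^{Re z - 1}. -/

import Mathlib

open Finset Real

private lemma log_diff_ge (a : ℝ) (ha : 0 < a) : 1/(a+1) ≤ Real.log (a+1) - Real.log a := by
  have h1 : Real.log (a / (a+1)) ≤ a/(a+1) - 1 :=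
    Real.log_le_sub_one_of_pos (by positivity)
  rw [Real.log_div (ne_of_gt ha) (by positivity)] at h1
  have h2 : a/(a+1) - 1 = -(1/(a+1)) := by field_simp; ring
  linarith

private lemma log_diff_le (a : ℝ) (ha : 0 < a) : Real.log (a+1) - Real.log a ≤ 1/a := by
  have h1 : Real.log ((a+1)/a) ≤ (a+1)/a - 1 :=
    Real.log_le_sub_one_of_pos (by positivity)
  rw [Real.log_div (by positivity) (ne_of_gt ha)] at h1
  have h2 : (a+1)/a - 1 = 1/a := by field_simp; ring
  linarith

private lemma sum_sq_le (n : ℕ) : ∑ k ∈ Finset.range n, (1/((k:ℝ)+1))^2 ≤ 2 := by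
  have h : ∀ N : ℕ, ∑ k ∈ Finset.range N, (1/((k:ℝ)+1))^2 ≤ 2 - 2/((N:ℝ)+1) := by
    intro N
    induction N with
    | zero => simp
    | succ N ih =>
      rw [Finset.sum_range_succ]
      have hn : (0:ℝ) < (N:ℝ)+1 := by positivity
      have hn2 : (0:ℝ) < (N:ℝ)+2 := by positivity
      have key : (1/((N:ℝ)+1))^2 ≤ 2/((N:ℝ)+1) - 2/((N:ℝ)+2) := by
        rw [div_sub_div _ _ (ne_of_gt hn) (ne_of_gt hn2), div_pow, one_pow,
          div_le_div_iff₀ (by positivity) (by positivity)]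
        nlinarith
      push_cast
      have e : (N:ℝ)+1+1 = (N:ℝ)+2 := by ring
      rw [e]
      linarith
  have h2 : (0:ℝ) ≤ 2/((n:ℝ)+1) := by positivity
  linarith [h n]

private lemma abs_one_add_le (w : ℂ) :
    ‖1 + w‖ ≤ Real.exp (w.re + (‖w‖)^2/2) := by
  have h1 : (‖1+w‖)^2 = 1 + (2*w.re + (‖w‖)^2) := by
    rw [← Complex.normSq_eq_norm_sq, ← Complex.normSq_eq_norm_sq]
    simp [Complex.normSq_apply, Complex.add_re, Complex.add_im]
    ring
  have h2 : (Real.exp (w.re + (‖w‖)^2/2))^2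
      = Real.exp (2*w.re + (‖w‖)^2) := by
    rw [sq, ← Real.exp_add]; ring_nf
  have h3 : (‖1+w‖)^2 ≤ (Real.exp (w.re + (‖w‖)^2/2))^2 := by
    rw [h1, h2]
    linarith [Real.add_one_le_exp (2*w.re + (‖w‖)^2)]
  exact le_of_pow_le_pow_left₀ two_ne_zero (Real.exp_nonneg _) h3

set_option maxHeartbeats 1000000 in
theorem stmt1 (m₀ : ℝ) (hm₀ : 0 ≤ m₀) (K : Set ℂ) (hK : IsCompact K) :
    ∃ C : ℝ, ∀ z ∈ K, ∀ m n : ℕ, m ≤ n → 1 ≤ n →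
      ‖∏ k ∈ Finset.Ico m n,
          (1 + ((((k : ℝ) + 1 + m₀ : ℝ)) : ℂ)⁻¹ * (z - 1))‖
        ≤ C * ((m₀ + n) / (m₀ + (max m 1 : ℕ))) ^ (z.re - 1) := by
  obtain ⟨R, hR⟩ := hK.isBounded.subset_closedBall 1
  set R' : ℝ := max R 0 with hR'def
  have hR0 : 0 ≤ R' := le_max_right _ _
  have hzR : ∀ z ∈ K, ‖z - 1‖ ≤ R' := by
    intro z hz
    have h := hR hz
    rw [Metric.mem_closedBall] at h
    calc ‖z-1‖ = dist z 1 := by rw [Complex.dist_eq]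
      _ ≤ R := h
      _ ≤ R' := le_max_left _ _
  refine ⟨Real.exp (R' + R'^2), ?_⟩
  intro z hz m n hmn hn
  set t : ℝ := z.re - 1 with htdef
  have htR : |t| ≤ R' := by
    have h1 := hzR z hz
    have h2 : |(z-1).re| ≤ ‖z - 1‖ := Complex.abs_re_le_norm _
    have h3 : (z-1).re = t := by simp [htdef, Complex.sub_re, Complex.one_re]
    rw [h3] at h2
    linarith
  set M : ℕ := max m 1 with hMdef
  have hmM : m ≤ M := le_max_left _ _
  have hMn : M ≤ n := max_le hmn hn
  have hM1 : 1 ≤ M := le_max_right _ _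
  have hMr : (1:ℝ) ≤ (M:ℝ) := by exact_mod_cast hM1
  have hm0M : 0 < m₀ + (M:ℝ) := by linarith
  have hnM : (M:ℝ) ≤ (n:ℝ) := by exact_mod_cast hMn
  have hm0n : 0 < m₀ + (n:ℝ) := by linarith
  set L : ℝ := Real.log ((n:ℝ)+m₀) - Real.log ((M:ℝ)+m₀) with hLdef
  -- positivity of denominators
  have hden : ∀ k : ℕ, (0:ℝ) < (k:ℝ)+1+m₀ := by
    intro k
    have : (0:ℝ) ≤ (k:ℝ) := Nat.cast_nonneg k
    linarith
  -- Step A: factor bound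
  have hfac : ∀ k ∈ Finset.Ico m n,
      ‖1 + ((((k : ℝ) + 1 + m₀ : ℝ)) : ℂ)⁻¹ * (z - 1)‖
        ≤ Real.exp (((k:ℝ)+1+m₀)⁻¹ * t + (((k:ℝ)+1+m₀)⁻¹)^2 * R'^2 / 2) := by
    intro k _
    have hγ : (0:ℝ) < ((k:ℝ)+1+m₀)⁻¹ := by positivity
    set w : ℂ := ((((k : ℝ) + 1 + m₀ : ℝ)) : ℂ)⁻¹ * (z - 1) with hwdef
    have hwre : w.re = ((k:ℝ)+1+m₀)⁻¹ * t := by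
      rw [hwdef, ← Complex.ofReal_inv, Complex.re_ofReal_mul]
      simp [Complex.sub_re, Complex.one_re, htdef]
    have hwabs : ‖w‖ = ((k:ℝ)+1+m₀)⁻¹ * ‖z-1‖ := by
      rw [hwdef, ← Complex.ofReal_inv, norm_mul, Complex.norm_of_nonneg hγ.le]
    have h1 := abs_one_add_le w
    refine h1.trans (Real.exp_le_exp.mpr ?_)
    rw [hwre, hwabs]
    have h2 : ‖z-1‖ ≤ R' := hzR z hz
    have h3 : (((k:ℝ)+1+m₀)⁻¹ * ‖z-1‖)^2 ≤ (((k:ℝ)+1+m₀)⁻¹)^2 * R'^2 := by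
      rw [mul_pow]
      exact mul_le_mul_of_nonneg_left (pow_le_pow_left₀ (norm_nonneg _) h2 2)
        (by positivity)
    linarith
  -- Step B: product bound
  set Sγ : ℝ := ∑ k ∈ Finset.Ico m n, ((k:ℝ)+1+m₀)⁻¹ with hSγdef
  set S2 : ℝ := ∑ k ∈ Finset.Ico m n, (((k:ℝ)+1+m₀)⁻¹)^2 with hS2def
  have hprod : ‖∏ k ∈ Finset.Ico m n,
      (1 + ((((k : ℝ) + 1 + m₀ : ℝ)) : ℂ)⁻¹ * (z - 1))‖
      ≤ Real.exp (t * Sγ + R'^2/2 * S2) := by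
    rw [norm_prod]
    calc ∏ k ∈ Finset.Ico m n, ‖1 + ((((k : ℝ) + 1 + m₀ : ℝ)) : ℂ)⁻¹ * (z - 1)‖
        ≤ ∏ k ∈ Finset.Ico m n,
            Real.exp (((k:ℝ)+1+m₀)⁻¹ * t + (((k:ℝ)+1+m₀)⁻¹)^2 * R'^2 / 2) :=
          Finset.prod_le_prod (fun k _ => by positivity) hfac
      _ = Real.exp (∑ k ∈ Finset.Ico m n,
            (((k:ℝ)+1+m₀)⁻¹ * t + (((k:ℝ)+1+m₀)⁻¹)^2 * R'^2 / 2)) :=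
          (Real.exp_sum _ _).symm
      _ = Real.exp (t * Sγ + R'^2/2 * S2) := by
          congr 1
          rw [hSγdef, hS2def, Finset.mul_sum, Finset.mul_sum, ← Finset.sum_add_distrib]
          exact Finset.sum_congr rfl (fun k _ => by ring)
  -- Step C1: S2 ≤ 2
  have hS2le : S2 ≤ 2 := by
    have h1 : S2 ≤ ∑ k ∈ Finset.Ico m n, (1/((k:ℝ)+1))^2 := by
      apply Finset.sum_le_sum
      intro k _
      have hk1 : (0:ℝ) < (k:ℝ)+1 := by positivity
      have : ((k:ℝ)+1+m₀)⁻¹ ≤ ((k:ℝ)+1)⁻¹ := by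
        apply inv_anti₀ hk1; linarith
      rw [one_div]
      have h0 : (0:ℝ) ≤ ((k:ℝ)+1+m₀)⁻¹ := le_of_lt (by positivity)
      nlinarith
    have h2 : ∑ k ∈ Finset.Ico m n, (1/((k:ℝ)+1))^2
        ≤ ∑ k ∈ Finset.range n, (1/((k:ℝ)+1))^2 := by
      apply Finset.sum_le_sum_of_subset_of_nonneg
      · intro k hk
        rw [Finset.mem_Ico] at hk
        exact Finset.mem_range.mpr hk.2
      · intro k _ _; positivity
    linarith [sum_sq_le n]
  -- Step C2: Sγ ≤ L + 1
  have htelM : ∑ k ∈ Finset.Ico M n, (Real.log ((k:ℝ)+1+m₀) - Real.log ((k:ℝ)+m₀))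
      = Real.log ((n:ℝ)+m₀) - Real.log ((M:ℝ)+m₀) := by
    have hf : ∀ N : ℕ, ∑ k ∈ Finset.range N,
        ((fun j : ℕ => Real.log ((j:ℝ)+m₀)) (k+1) - (fun j : ℕ => Real.log ((j:ℝ)+m₀)) k)
          = Real.log ((N:ℝ)+m₀) - Real.log ((0:ℝ)+m₀) := by
      intro N
      have := Finset.sum_range_sub (fun j : ℕ => Real.log ((j:ℝ)+m₀)) N
      simpa using this
    rw [Finset.sum_Ico_eq_sub _ hMn]
    have e1 : ∀ N : ℕ, ∑ k ∈ Finset.range N,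
        (Real.log ((k:ℝ)+1+m₀) - Real.log ((k:ℝ)+m₀))
          = Real.log ((N:ℝ)+m₀) - Real.log ((0:ℝ)+m₀) := by
      intro N
      rw [← hf N]
      apply Finset.sum_congr rfl
      intro k _
      push_cast
      ring_nf
    rw [e1 n, e1 M]
    ring
  have hSub : Sγ ≤ L + 1 := by
    have hsplit : Sγ = ∑ k ∈ Finset.Ico m M, ((k:ℝ)+1+m₀)⁻¹
        + ∑ k ∈ Finset.Ico M n, ((k:ℝ)+1+m₀)⁻¹ := by
      rw [hSγdef, ← Finset.sum_Ico_consecutive _ hmM hMn]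
    have h1 : ∑ k ∈ Finset.Ico m M, ((k:ℝ)+1+m₀)⁻¹ ≤ 1 := by
      have hcard : (Finset.Ico m M).card ≤ 1 := by
        rw [Nat.card_Ico]
        have : M ≤ m + 1 := by
          rcases Nat.eq_zero_or_pos m with h | h
          · simp [hMdef, h]
          · simp [hMdef, Nat.max_eq_left h]
        omega
      calc ∑ k ∈ Finset.Ico m M, ((k:ℝ)+1+m₀)⁻¹
          ≤ ∑ _k ∈ Finset.Ico m M, (1:ℝ) := by
            apply Finset.sum_le_sum
            intro k _
            have hk := hden k
            rw [inv_le_one_iff₀]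
            right
            have : (0:ℝ) ≤ (k:ℝ) := Nat.cast_nonneg k
            linarith
        _ = (Finset.Ico m M).card := by simp
        _ ≤ 1 := by exact_mod_cast hcard
    have h2 : ∑ k ∈ Finset.Ico M n, ((k:ℝ)+1+m₀)⁻¹
        ≤ Real.log ((n:ℝ)+m₀) - Real.log ((M:ℝ)+m₀) := by
      rw [← htelM]
      apply Finset.sum_le_sum
      intro k hk
      rw [Finset.mem_Ico] at hk
      have hk1 : 1 ≤ k := le_trans hM1 hk.1
      have hkr : (1:ℝ) ≤ (k:ℝ) := by exact_mod_cast hk1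
      have ha : (0:ℝ) < (k:ℝ)+m₀ := by linarith
      have := log_diff_ge ((k:ℝ)+m₀) ha
      have e1 : (k:ℝ)+m₀+1 = (k:ℝ)+1+m₀ := by ring
      rw [e1] at this
      rw [one_div] at this
      exact this
    rw [hsplit, hLdef]
    linarith
  -- Step C3: L - 1 ≤ Sγ
  have hSlb : L - 1 ≤ Sγ := by
    have htel2 : ∑ k ∈ Finset.Ico m n, (Real.log ((k:ℝ)+2+m₀) - Real.log ((k:ℝ)+1+m₀))
        = Real.log ((n:ℝ)+1+m₀) - Real.log ((m:ℝ)+1+m₀) := by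
      have hf : ∀ N : ℕ, ∑ k ∈ Finset.range N,
          ((fun j : ℕ => Real.log ((j:ℝ)+1+m₀)) (k+1) - (fun j : ℕ => Real.log ((j:ℝ)+1+m₀)) k)
            = Real.log ((N:ℝ)+1+m₀) - Real.log ((0:ℝ)+1+m₀) := by
        intro N
        have := Finset.sum_range_sub (fun j : ℕ => Real.log ((j:ℝ)+1+m₀)) N
        simpa using this
      rw [Finset.sum_Ico_eq_sub _ hmn]
      have e1 : ∀ N : ℕ, ∑ k ∈ Finset.range N,
          (Real.log ((k:ℝ)+2+m₀) - Real.log ((k:ℝ)+1+m₀))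
            = Real.log ((N:ℝ)+1+m₀) - Real.log ((0:ℝ)+1+m₀) := by
        intro N
        rw [← hf N]
        apply Finset.sum_congr rfl
        intro k _
        push_cast
        ring_nf
      rw [e1 n, e1 m]
      ring
    have h1 : Real.log ((n:ℝ)+1+m₀) - Real.log ((m:ℝ)+1+m₀) ≤ Sγ := by
      rw [hSγdef, ← htel2]
      apply Finset.sum_le_sum
      intro k _
      have ha := hden k
      have := log_diff_le ((k:ℝ)+1+m₀) ha
      have e1 : (k:ℝ)+1+m₀+1 = (k:ℝ)+2+m₀ := by ring
      rw [e1, one_div] at this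
      exact this
    have h2 : Real.log ((n:ℝ)+m₀) ≤ Real.log ((n:ℝ)+1+m₀) :=
      Real.log_le_log (by linarith) (by linarith)
    have hm2M : (m:ℝ) + 1 ≤ 2 * (M:ℝ) := by
      have : m + 1 ≤ 2 * M := by
        rcases Nat.eq_zero_or_pos m with h | h
        · simp [hMdef, h]
        · rw [hMdef, Nat.max_eq_left h]; omega
      exact_mod_cast this
    have h3 : Real.log ((m:ℝ)+1+m₀) ≤ Real.log 2 + Real.log ((M:ℝ)+m₀) := by
      have hle : (m:ℝ)+1+m₀ ≤ 2 * ((M:ℝ)+m₀) := by linarith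
      calc Real.log ((m:ℝ)+1+m₀) ≤ Real.log (2 * ((M:ℝ)+m₀)) := by
            apply Real.log_le_log
            · have : (0:ℝ) ≤ (m:ℝ) := Nat.cast_nonneg m
              linarith
            · exact hle
        _ = Real.log 2 + Real.log ((M:ℝ)+m₀) := Real.log_mul two_ne_zero (ne_of_gt (by linarith))
    have hlog2 : Real.log 2 ≤ 1 := by
      have := Real.log_le_sub_one_of_pos (by norm_num : (0:ℝ) < 2)
      linarith
    rw [hLdef]
    linarith
  -- assemble
  have hrpow : ((m₀ + (n:ℝ)) / (m₀ + ((M:ℕ):ℝ))) ^ t = Real.exp (L * t) := by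
    rw [Real.rpow_def_of_pos (by positivity), Real.log_div (ne_of_gt hm0n) (ne_of_gt hm0M)]
    congr 2
    rw [hLdef]
    rw [add_comm m₀ (n:ℝ), add_comm m₀ ((M:ℕ):ℝ)]
  have hkey : t * Sγ + R'^2/2 * S2 ≤ (R' + R'^2) + L * t := by
    have hd : |Sγ - L| ≤ 1 := abs_le.mpr ⟨by linarith, by linarith⟩
    have h1 : t * (Sγ - L) ≤ |t| * |Sγ - L| := by
      calc t * (Sγ - L) ≤ |t * (Sγ - L)| := le_abs_self _
        _ = |t| * |Sγ - L| := abs_mul _ _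
    have h2 : |t| * |Sγ - L| ≤ R' * 1 :=
      mul_le_mul htR hd (abs_nonneg _) hR0
    have h3 : R'^2/2 * S2 ≤ R'^2 := by nlinarith
    have h4 : t * (Sγ - L) ≤ R' := by
      calc t * (Sγ - L) ≤ |t| * |Sγ - L| := h1
        _ ≤ R' * 1 := h2
        _ = R' := mul_one _
    calc t * Sγ + R'^2/2 * S2 = t * (Sγ - L) + R'^2/2 * S2 + L * t := by ring
      _ ≤ R' + R'^2 + L * t := add_le_add (add_le_add h4 h3) le_rfl
      _ = (R' + R'^2) + L * t := by ring
  calc ‖∏ k ∈ Finset.Ico m n,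
        (1 + ((((k : ℝ) + 1 + m₀ : ℝ)) : ℂ)⁻¹ * (z - 1))‖
      ≤ Real.exp (t * Sγ + R'^2/2 * S2) := hprod
    _ ≤ Real.exp ((R' + R'^2) + L * t) := Real.exp_le_exp.mpr hkey
    _ = Real.exp (R' + R'^2) * Real.exp (L * t) := Real.exp_add _ _
    _ = Real.exp (R' + R'^2) * ((m₀ + (n:ℝ)) / (m₀ + ((M:ℕ):ℝ))) ^ t := by rw [hrpow]
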